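/- arXiv:2106.02685 — 10 statements merged into one kernel-verified Lean document; each statement's English description precedes it below -/
import Mathlib

section
/- In any metric space, the optimal r-gather cost (the minimum over all partitions of P into clusters of size at least r, with arbitrary centers from the metric space, of the maximum distance from a point to its cluster center) is at least half the maximum over all points p in P of the distance from p to its r-th nearest neighbor in P. -/
/-!
If every cluster has radius at most `S` around its center, any two points of the cluster of `p`
are within `2 S` of each other, so the at least `r` points of that cluster lie in the closed ball
of radius `2 S` about `p`, whence `rhoNN P r p ≤ 2 S`.
-/

/-- The distance from `p` to its `r`-th nearest neighbor in `P`
(where `p` counts as its own 1st nearest neighbor when `p ∈ P`). -/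
noncomputable def rhoNN {X : Type*} [MetricSpace X] (P : Finset X) (r : ℕ) (p : X) : ℝ :=
  sInf {R : ℝ | 0 ≤ R ∧ r ≤ (P.filter fun q => dist p q ≤ R).card}

section

variable {X : Type*} [MetricSpace X]

lemma rhoNN_le_of_subset {P C : Finset X} {r : ℕ} {p : X} {R : ℝ} (hCP : C ⊆ P) (hp : p ∈ C)
    (hrC : r ≤ C.card) (hR : ∀ q ∈ C, dist p q ≤ R) : rhoNN P r p ≤ R := by
  classical
  refine csInf_le ⟨0, fun _ h => h.1⟩ ⟨(dist_self p).symm.le.trans (hR p hp), ?_⟩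
  refine hrC.trans (Finset.card_le_card fun q hq => ?_)
  exact Finset.mem_filter.2 ⟨hCP hq, hR q hq⟩

lemma dist_le_dist_add_dist_of_map_eq (f : X → X) {p q : X} (h : f q = f p) :
    dist p q ≤ dist p (f p) + dist q (f q) := by
  calc dist p q ≤ dist p (f p) + dist (f p) q := dist_triangle _ _ _
    _ = dist p (f p) + dist q (f q) := by rw [← h, dist_comm (f q) q]

end

open Classical in
theorem stmt0_general {X : Type*} [MetricSpace X] (P : Finset X) (r : ℕ) (hne : P.Nonempty)
    (f : X → X) (hf : ∀ p ∈ P, r ≤ (P.filter fun q => f q = f p).card) :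
    P.sup' hne (fun p => rhoNN P r p) / 2 ≤ P.sup' hne fun p => dist p (f p) := by
  set S := P.sup' hne fun p => dist p (f p)
  have hS : ∀ q ∈ P, dist q (f q) ≤ S := fun q hq => Finset.le_sup' (fun p => dist p (f p)) hq
  rw [div_le_iff₀ two_pos]
  refine Finset.sup'_le _ _ fun p hp => ?_
  refine rhoNN_le_of_subset (Finset.filter_subset (fun q => f q = f p) P)
    (Finset.mem_filter.2 ⟨hp, rfl⟩) (hf p hp) fun q hq => ?_
  obtain ⟨hqP, hfq⟩ := Finset.mem_filter.1 hq
  linarith [dist_le_dist_add_dist_of_map_eq f hfq, hS p hp, hS q hqP]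

open Classical in
/-- The optimal `r`-gather cost (over clusterings `f` assigning each point a center,
with every cluster of size at least `r`) is at least half the maximum over `p ∈ P`
of the distance from `p` to its `r`-th nearest neighbor. -/
theorem stmt0 {X : Type*} [MetricSpace X] (P : Finset X) (r : ℕ) (hr : 1 ≤ r)
    (hcard : r ≤ P.card) (hne : P.Nonempty)
    (f : X → X) (hf : ∀ p ∈ P, r ≤ (P.filter fun q => f q = f p).card) :
    P.sup' hne (fun p => rhoNN P r p) / 2 ≤ P.sup' hne fun p => dist p (f p) :=
  stmt0_general P r hne f hf
end

section
/- Let G be a C-approximate (R,r)-near neighbor graph of P, and let S be a beta-ruling set of the square graph G^2. Assign every point of P to a cluster whose center is its closest point of S in graph distance in G. Then every point lies at metric distance at most 2*beta*C*R from its assigned center; and if R >= max_{p in P} rho_r(p), then every cluster has size at least r. -/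
/-- `u` and `v` are within graph distance `k` in `G`. -/
def withinDist {V : Type*} (G : SimpleGraph V) (k : ℕ) (u v : V) : Prop :=
  ∃ w : G.Walk u v, w.length ≤ k

open Finset

namespace withinDist

variable {V : Type*} {G : SimpleGraph V}

theorem symm {k : ℕ} {u v : V} (h : withinDist G k u v) : withinDist G k v u :=
  let ⟨w, hw⟩ := h
  ⟨w.reverse, by rwa [SimpleGraph.Walk.length_reverse]⟩

theorem trans {m n : ℕ} {u v w : V} (huv : withinDist G m u v) (hvw : withinDist G n v w) :
    withinDist G (m + n) u w :=
  let ⟨p, hp⟩ := huv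
  let ⟨q, hq⟩ := hvw
  ⟨p.append q, by rw [SimpleGraph.Walk.length_append]; omega⟩

theorem one_of_adj_or_eq {u v : V} (h : G.Adj u v ∨ v = u) : withinDist G 1 v u := by
  rcases h with hadj | rfl
  · exact ⟨.cons hadj.symm .nil, by simp⟩
  · exact ⟨.nil, by simp⟩

theorem eq_of_one {S : Set V} (hS : ∀ s ∈ S, ∀ s' ∈ S, s ≠ s' → ¬ withinDist G 2 s s')
    {s t q : V} (hs : s ∈ S) (ht : t ∈ S) (hqs : withinDist G 1 q s)
    (hqt : withinDist G 1 q t) : t = s := by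
  by_contra hts
  exact hS s hs t ht (Ne.symm hts) (hqs.symm.trans hqt)

end withinDist

section PseudoMetric

variable {X : Type*} [PseudoMetricSpace X]

theorem dist_le_length_mul_of_walk {G : SimpleGraph X} {B : ℝ}
    (hG : ∀ p q, G.Adj p q → dist p q ≤ B) {u v : X} (w : G.Walk u v) :
    dist u v ≤ w.length * B := by
  induction w with
  | nil => simp
  | cons h w ih =>
    calc dist _ _ ≤ dist _ _ + dist _ _ := dist_triangle _ _ _
      _ ≤ B + w.length * B := add_le_add (hG _ _ h) ih
      _ = (w.cons h).length * B := by push_cast [SimpleGraph.Walk.length_cons]; ring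

theorem dist_le_of_withinDist {G : SimpleGraph X} {B : ℝ} (hB : 0 ≤ B)
    (hG : ∀ p q, G.Adj p q → dist p q ≤ B) {k : ℕ} {u v : X} (h : withinDist G k u v) :
    dist u v ≤ k * B := by
  obtain ⟨w, hw⟩ := h
  calc dist u v ≤ w.length * B := dist_le_length_mul_of_walk hG w
    _ ≤ k * B := by gcongr

end PseudoMetric

theorem le_card_filter_dist_le_of_rhoNN_le {X : Type*} [MetricSpace X] {P : Finset X} {r : ℕ}
    {p : X} {R : ℝ} (hcard : r ≤ #P) (hρ : rhoNN P r p ≤ R) :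
    r ≤ #(P.filter fun q => dist p q ≤ R) := by
  by_contra! hlt
  have hfar : (P.filter fun q => R < dist p q).Nonempty := by
    by_contra! hempty
    have hall : P.filter (fun q => dist p q ≤ R) = P :=
      filter_true_of_mem fun q hq => not_lt.mp (filter_eq_empty_iff.mp hempty hq)
    rw [hall] at hlt
    omega
  -- `q₀` realises the first distance beyond `R`; no smaller radius captures more points than `R`.
  obtain ⟨q₀, hq₀, hmin⟩ := exists_min_image _ (dist p) hfar
  have hRd : R < dist p q₀ := (mem_filter.mp hq₀).2
  have hnonempty : {R' : ℝ | 0 ≤ R' ∧ r ≤ #(P.filter fun q => dist p q ≤ R')}.Nonempty := by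
    refine ⟨∑ q ∈ P, dist p q, sum_nonneg fun q _ => dist_nonneg, ?_⟩
    rwa [filter_true_of_mem fun q hq => single_le_sum (f := dist p) (fun q _ => dist_nonneg) hq]
  have hlower : dist p q₀ ≤ rhoNN P r p := by
    refine le_csInf hnonempty fun R' ⟨_, hR'⟩ => ?_
    by_contra! hR'd
    have hsub : (P.filter fun q => dist p q ≤ R') ⊆ P.filter fun q => dist p q ≤ R := by
      intro q hq
      rw [mem_filter] at hq ⊢
      refine ⟨hq.1, not_lt.mp fun hqR => ?_⟩
      linarith [hmin q (mem_filter.mpr ⟨hq.1, hqR⟩)]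
    have := card_le_card hsub
    omega
  linarith

open Classical in
theorem stmt1_general {X : Type*} [MetricSpace X] (P : Finset X) (r : ℕ)
    (hcard : r ≤ P.card)
    (C R : ℝ) (hC : 1 ≤ C) (hR : 0 ≤ R) (β : ℕ)
    (G : SimpleGraph X)
    -- every edge of `G` has metric length at most `C·R`
    (hG1 : ∀ p q, G.Adj p q → dist p q ≤ C * R)
    -- every vertex either has at least `r` vertices in its closed neighborhood,
    -- or its closed neighborhood contains all points within distance `R`
    (hG2 : ∀ p ∈ P, r ≤ (P.filter fun q => G.Adj p q ∨ q = p).card ∨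
      ∀ q ∈ P, dist p q ≤ R → (G.Adj p q ∨ q = p))
    -- `S` is a `β`-ruling set of `G²`:
    (S : Finset X) (hSP : S ⊆ P)
    (hSind : ∀ s ∈ S, ∀ s' ∈ S, s ≠ s' → ¬ withinDist G 2 s s')
    (hSrul : ∀ p ∈ P, ∃ s ∈ S, withinDist G (2 * β) p s)
    -- `c` assigns every point of `P` to a closest point of `S` in `G`-distance
    (c : X → X)
    (hc : ∀ p ∈ P, c p ∈ S ∧
      ∀ s ∈ S, ∀ m : ℕ, withinDist G m p s → withinDist G m p (c p)) :
    (∀ p ∈ P, dist p (c p) ≤ 2 * β * C * R) ∧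
    ((∀ p ∈ P, rhoNN P r p ≤ R) →
      ∀ p ∈ P, r ≤ (P.filter fun q => c q = c p).card) := by
  refine ⟨fun p hp => ?_, fun hρ p hp => ?_⟩
  · obtain ⟨s, hs, hps⟩ := hSrul p hp
    have hdist := dist_le_of_withinDist (by positivity) hG1 ((hc p hp).2 s hs _ hps)
    push_cast at hdist
    linarith
  · set s := c p
    have hs : s ∈ S := (hc p hp).1
    have hnbhd : (P.filter fun q => G.Adj s q ∨ q = s) ⊆ P.filter fun q => c q = s := by
      refine monotone_filter_right _ fun q hq hadj => ?_
      have hq1 := withinDist.one_of_adj_or_eq hadj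
      exact withinDist.eq_of_one hSind hs (hc q hq).1 hq1 ((hc q hq).2 s hs 1 hq1)
    rcases hG2 s (hSP hs) with hdeg | hball
    · exact hdeg.trans (card_le_card hnbhd)
    · refine (le_card_filter_dist_le_of_rhoNN_le hcard (hρ s (hSP hs))).trans
        (card_le_card ((monotone_filter_right _ hball).trans hnbhd))

open Classical in
/-- Lemma: given a `C`-approximate `(R,r)`-near neighbor graph `G` of `P` and a
`β`-ruling set `S` of `G²`, assigning each point to a closest (in `G`-distance)
point of `S` produces clusters of radius at most `2βCR`; and if
`R ≥ max_{p ∈ P} ρ_r(p)`, then every cluster has size at least `r`. -/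
theorem stmt1 {X : Type*} [MetricSpace X] (P : Finset X) (r : ℕ) (hr : 1 ≤ r)
    (hcard : r ≤ P.card)
    (C R : ℝ) (hC : 1 ≤ C) (hR : 0 ≤ R) (β : ℕ) (hβ : 1 ≤ β)
    (G : SimpleGraph X)
    -- `G` is a graph on the vertex set `P`
    (hGP : ∀ p q, G.Adj p q → p ∈ P ∧ q ∈ P)
    -- every edge of `G` has metric length at most `C·R`
    (hG1 : ∀ p q, G.Adj p q → dist p q ≤ C * R)
    -- every vertex either has at least `r` vertices in its closed neighborhood,
    -- or its closed neighborhood contains all points within distance `R`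
    (hG2 : ∀ p ∈ P, r ≤ (P.filter fun q => G.Adj p q ∨ q = p).card ∨
      ∀ q ∈ P, dist p q ≤ R → (G.Adj p q ∨ q = p))
    -- `S` is a `β`-ruling set of `G²`:
    (S : Finset X) (hSP : S ⊆ P)
    (hSind : ∀ s ∈ S, ∀ s' ∈ S, s ≠ s' → ¬ withinDist G 2 s s')
    (hSrul : ∀ p ∈ P, ∃ s ∈ S, withinDist G (2 * β) p s)
    -- `c` assigns every point of `P` to a closest point of `S` in `G`-distance
    (c : X → X)
    (hc : ∀ p ∈ P, c p ∈ S ∧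
      ∀ s ∈ S, ∀ m : ℕ, withinDist G m p s → withinDist G m p (c p)) :
    (∀ p ∈ P, dist p (c p) ≤ 2 * β * C * R) ∧
    ((∀ p ∈ P, rhoNN P r p ≤ R) →
      ∀ p ∈ P, r ≤ (P.filter fun q => c q = c p).card) :=
  stmt1_general P r hcard C R hC hR β G hG1 hG2 S hSP hSind hSrul c hc
end

section
/- For r-gather with at most k outliers, the optimal cost rho*^k(P) (minimum over choices of an outlier set O of size at most k of the optimal r-gather cost of P\O) is at least half of rho_hat^k(P), the (k+1)-th largest value among {rho_r(P,p) : p in P}. -/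
/-!
Keep the outliers `O`. If every point of the cluster of `p` is within `D` of its center `f p`, the
triangle inequality puts the whole cluster, which has at least `r` points, within `2D` of `p`, so
`ρ_r(P,p) ≤ 2D`. Taking `D` maximal, it is attained at some point `q` of the cluster.
-/

section RhoNN

variable {X : Type*} [MetricSpace X] {P : Finset X} {r : ℕ} {p : X}

theorem rhoNN_le {R : ℝ} (hR : 0 ≤ R) (h : r ≤ (P.filter fun q => dist p q ≤ R).card) :
    rhoNN P r p ≤ R :=
  csInf_le ⟨0, fun _ hx => hx.1⟩ ⟨hR, h⟩

theorem rhoNN_le_two_mul_of_subset {C : Finset X} {c : X} {D : ℝ} (hCP : C ⊆ P) (hp : p ∈ C)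
    (hrC : r ≤ C.card) (hD : ∀ q ∈ C, dist q c ≤ D) : rhoNN P r p ≤ 2 * D := by
  have hD_nonneg : 0 ≤ D := dist_nonneg.trans (hD p hp)
  refine rhoNN_le (by positivity) (hrC.trans (Finset.card_le_card fun q hq => ?_))
  refine Finset.mem_filter.mpr ⟨hCP hq, ?_⟩
  calc dist p q ≤ dist p c + dist q c := dist_triangle_right p q c
    _ ≤ D + D := add_le_add (hD p hp) (hD q hq)
    _ = 2 * D := (two_mul D).symm

end RhoNN

open Classical in
theorem stmt2_general {X : Type*} [MetricSpace X] (P : Finset X) (r k : ℕ)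
    (O : Finset X) (hOP : O ⊆ P) (hO : O.card ≤ k)
    (f : X → X)
    (hf : ∀ p ∈ P \ O, r ≤ ((P \ O).filter fun q => f q = f p).card) :
    ∃ O' ⊆ P, O'.card ≤ k ∧
      ∀ p ∈ P \ O', ∃ q ∈ P \ O, rhoNN P r p ≤ 2 * dist q (f q) := by
  refine ⟨O, hOP, hO, fun p hp => ?_⟩
  set cluster := (P \ O).filter fun q => f q = f p
  have hp_cluster : p ∈ cluster := Finset.mem_filter.mpr ⟨hp, rfl⟩
  obtain ⟨q, hq, hq_max⟩ := cluster.exists_max_image (fun q => dist q (f p)) ⟨p, hp_cluster⟩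
  obtain ⟨hqPO, hqf⟩ := Finset.mem_filter.mp hq
  refine ⟨q, hqPO, ?_⟩
  rw [hqf]
  exact rhoNN_le_two_mul_of_subset ((Finset.filter_subset _ _).trans Finset.sdiff_subset) hp_cluster
    (hf p hp) hq_max

open Classical in
/-- For `r`-gather with at most `k` outliers: for any outlier set `O` (`|O| ≤ k`)
and any valid `r`-gather clustering `f` of `P \ O`, the `(k+1)`-th largest value
of `ρ_r(P,·)` is at most twice the cost of `f`; i.e. there is an outlier set `O'`
of size at most `k` such that every remaining point `p` satisfies
`ρ_r(P,p) ≤ 2 · cost`, where the cost is the maximum point-to-center distance,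
expressed here by exhibiting a witness `q ∈ P \ O`. -/
theorem stmt2 {X : Type*} [MetricSpace X] (P : Finset X) (r k : ℕ) (hr : 1 ≤ r)
    (hk : k + r ≤ P.card)
    (O : Finset X) (hOP : O ⊆ P) (hO : O.card ≤ k)
    (f : X → X)
    (hf : ∀ p ∈ P \ O, r ≤ ((P \ O).filter fun q => f q = f p).card) :
    ∃ O' ⊆ P, O'.card ≤ k ∧
      ∀ p ∈ P \ O', ∃ q ∈ P \ O, rhoNN P r p ≤ 2 * dist q (f q) :=
  stmt2_general P r k O hOP hO f hf
end

section
/- For any finite point set P in a metric space and any r >= 1 and constant k >= 1, the sum over p in P of rho_r(p)^k is at most 2^(2k+1) * r * OPT(P), where OPT(P) is the minimum total k-th power distance cost over all partitions of P into clusters of size at least r with centers in the metric space. -/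
/-!
Fix a cluster `C` with center `c` and let `ρ` be the radius of the `r`-th nearest neighbour of `c`
within `C`. Fewer than `r` points of `C` lie strictly closer to `c` than `ρ`, so Markov's inequality
gives `(#C - r + 1) ρ^k ≤ ∑_{q ∈ C} d(q, c)^k`, hence `#C ρ^k ≤ r ∑_{q ∈ C} d(q, c)^k` as `#C ≥ r`.
By the triangle inequality `ρ_r(p) ≤ d(p, c) + ρ` for `p ∈ C`, so
`ρ_r(p)^k ≤ 2^(k-1) (d(p, c)^k + ρ^k)`; summing over each cluster and then over all clusters gives
the constant `2^(k-1) (1 + r) ≤ 2^(2k+1) r`.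
-/

open Finset

theorem Finset.sum_sum_fiber_div_card_fiber {α β K : Type*} [DecidableEq β] [Semifield K]
    [CharZero K] (s : Finset α) (f : α → β) (w : α → K) :
    ∑ p ∈ s, (∑ q ∈ s with f q = f p, w q) / #{q ∈ s | f q = f p} = ∑ q ∈ s, w q := by
  calc ∑ p ∈ s, (∑ q ∈ s with f q = f p, w q) / #{q ∈ s | f q = f p}
      = ∑ b ∈ s.image f, ∑ q ∈ s with f q = b, w q := by
        refine (sum_image' (f := fun b => ∑ q ∈ s with f q = b, w q) _ fun p hp => ?_).symm
        have hfiber : ({q ∈ s | f q = f p}).Nonempty := ⟨p, mem_filter.mpr ⟨hp, rfl⟩⟩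
        have hcard : (#{q ∈ s | f q = f p} : K) ≠ 0 := Nat.cast_ne_zero.mpr hfiber.card_pos.ne'
        symm
        rw [sum_eq_card_nsmul fun j hj => by rw [(mem_filter.mp hj).2], nsmul_eq_mul,
          mul_div_cancel₀ _ hcard]
    _ = ∑ q ∈ s, w q := sum_image' w fun _ _ => rfl

namespace rhoNN
variable {X : Type*} [MetricSpace X] {P : Finset X} {r : ℕ} {p : X}

lemma nonneg : 0 ≤ rhoNN P r p := Real.sInf_nonneg fun _ hR => hR.1

lemma le_of_le_card {R : ℝ} (hR : 0 ≤ R) (h : r ≤ #{q ∈ P | dist p q ≤ R}) :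
    rhoNN P r p ≤ R :=
  csInf_le ⟨0, fun _ hR => hR.1⟩ ⟨hR, h⟩

lemma card_filter_dist_lt (hr : 1 ≤ r) : #{q ∈ P | dist p q < rhoNN P r p} < r := by
  by_contra! h
  set A := {q ∈ P | dist p q < rhoNN P r p}
  have hA : A.Nonempty := card_pos.mp (by omega)
  have hsup : A.sup' hA (dist p) < rhoNN P r p :=
    (sup'_lt_iff hA).mpr fun q hq => (mem_filter.mp hq).2
  refine hsup.not_ge (le_of_le_card (dist_nonneg.trans (le_sup' (dist p) hA.choose_spec))
    (h.trans (card_le_card fun q hq => ?_)))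
  exact mem_filter.mpr ⟨(mem_filter.mp hq).1, le_sup' (dist p) hq⟩

lemma le_dist_add_rhoNN {C : Finset X} (hCP : C ⊆ P) (hC : r ≤ #C) (p c : X) :
    rhoNN P r p ≤ dist p c + rhoNN C r c := by
  rw [← sub_le_iff_le_add']
  refine le_csInf ⟨∑ q ∈ C, dist c q, sum_nonneg fun _ _ => dist_nonneg, ?_⟩ ?_
  · rwa [filter_true_of_mem fun q hq => single_le_sum (f := dist c) (fun _ _ => dist_nonneg) hq]
  · rintro R ⟨hR, hcount⟩
    rw [sub_le_iff_le_add']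
    refine le_of_le_card (add_nonneg dist_nonneg hR) (hcount.trans (card_le_card fun q hq => ?_))
    obtain ⟨hqC, hcq⟩ := mem_filter.mp hq
    exact mem_filter.mpr ⟨hCP hqC, (dist_triangle p c q).trans (by linarith)⟩

lemma pow_le_two_pow_mul_add {C : Finset X} (hCP : C ⊆ P) (hC : r ≤ #C) (p c : X) (k : ℕ) :
    rhoNN P r p ^ k ≤ 2 ^ (k - 1) * (dist p c ^ k + rhoNN C r c ^ k) :=
  (pow_le_pow_left₀ nonneg (le_dist_add_rhoNN hCP hC p c) k).trans
    (add_pow_le dist_nonneg nonneg k)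

lemma card_sub_add_one_mul_pow_le_sum (hr : 1 ≤ r) (C : Finset X) (c : X) (k : ℕ) :
    ((#C : ℝ) - r + 1) * rhoNN C r c ^ k ≤ ∑ q ∈ C, dist q c ^ k := by
  have hsplit := card_filter_add_card_filter_not (s := C) (fun q => dist c q < rhoNN C r c)
  set B := {q ∈ C | ¬ dist c q < rhoNN C r c}
  have hB : (#C : ℝ) - r + 1 ≤ #B := by
    have hlt := card_filter_dist_lt (P := C) (p := c) hr
    have : ((#C + 1 : ℕ) : ℝ) ≤ ((r + #B : ℕ) : ℝ) := by exact_mod_cast (by omega)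
    push_cast at this
    linarith
  calc ((#C : ℝ) - r + 1) * rhoNN C r c ^ k ≤ #B * rhoNN C r c ^ k :=
        mul_le_mul_of_nonneg_right hB (pow_nonneg nonneg k)
    _ ≤ ∑ q ∈ B, dist q c ^ k := by
        rw [← nsmul_eq_mul]
        exact card_nsmul_le_sum _ _ _ fun q hq => by
          rw [dist_comm]; exact pow_le_pow_left₀ nonneg (not_lt.mp (mem_filter.mp hq).2) k
    _ ≤ ∑ q ∈ C, dist q c ^ k :=
        sum_le_sum_of_subset_of_nonneg (filter_subset _ _) fun _ _ _ => pow_nonneg dist_nonneg k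

lemma card_mul_pow_le_mul_sum (hr : 1 ≤ r) {C : Finset X} (hC : r ≤ #C) (c : X) (k : ℕ) :
    #C * rhoNN C r c ^ k ≤ r * ∑ q ∈ C, dist q c ^ k := by
  have hr' : (1 : ℝ) ≤ r := by exact_mod_cast hr
  have hC' : (r : ℝ) ≤ #C := by exact_mod_cast hC
  have := card_sub_add_one_mul_pow_le_sum hr C c k
  have := pow_nonneg (nonneg (P := C) (r := r) (p := c)) k
  nlinarith [mul_nonneg (sub_nonneg.mpr hr') (sub_nonneg.mpr hC')]

end rhoNN

open rhoNN in
lemma sum_rhoNN_fiber_pow_le {X : Type*} [MetricSpace X] [DecidableEq X] (P : Finset X)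
    {r : ℕ} (hr : 1 ≤ r) (f : X → X) (hf : ∀ p ∈ P, r ≤ #{q ∈ P | f q = f p}) (k : ℕ) :
    ∑ p ∈ P, rhoNN {q ∈ P | f q = f p} r (f p) ^ k ≤ r * ∑ p ∈ P, dist p (f p) ^ k := by
  have hfiber_sum : ∀ p, ∑ q ∈ P with f q = f p, dist q (f p) ^ k =
      ∑ q ∈ P with f q = f p, dist q (f q) ^ k := fun p =>
    sum_congr rfl fun q hq => by rw [(mem_filter.mp hq).2]
  calc ∑ p ∈ P, rhoNN {q ∈ P | f q = f p} r (f p) ^ k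
      = ∑ p ∈ P, #{q ∈ P | f q = f p} * rhoNN {q ∈ P | f q = f p} r (f p) ^ k
          / #{q ∈ P | f q = f p} := sum_congr rfl fun p hp => by
        rw [mul_div_cancel_left₀ _ (Nat.cast_ne_zero.mpr (by have := hf p hp; omega))]
    _ ≤ ∑ p ∈ P, r * (∑ q ∈ P with f q = f p, dist q (f q) ^ k) / #{q ∈ P | f q = f p} := by
        gcongr ∑ p ∈ P, ?_ / _ with p hp
        rw [← hfiber_sum]
        exact card_mul_pow_le_mul_sum hr (hf p hp) _ k
    _ = r * ∑ p ∈ P, dist p (f p) ^ k := by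
        simp_rw [mul_div_assoc, ← mul_sum, sum_sum_fiber_div_card_fiber]

open Classical in
theorem stmt4_general {X : Type*} [MetricSpace X] (P : Finset X) (r k : ℕ) (hr : 1 ≤ r)
    (f : X → X) (hf : ∀ p ∈ P, r ≤ (P.filter fun q => f q = f p).card) :
    ∑ p ∈ P, rhoNN P r p ^ k ≤
      2 ^ (2 * k + 1) * (r : ℝ) * ∑ p ∈ P, dist p (f p) ^ k := by
  set S := ∑ p ∈ P, dist p (f p) ^ k
  have hS : 0 ≤ S := sum_nonneg fun _ _ => pow_nonneg dist_nonneg k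
  have hconst : (2 : ℝ) ^ (k - 1) * (1 + r) ≤ 2 ^ (2 * k + 1) * r := by
    have hr' : (1 : ℝ) ≤ r := by exact_mod_cast hr
    calc (2 : ℝ) ^ (k - 1) * (1 + r) ≤ 2 ^ (2 * k) * (2 * r) :=
          mul_le_mul (pow_le_pow_right₀ one_le_two (by omega)) (by linarith) (by positivity)
            (by positivity)
      _ = 2 ^ (2 * k + 1) * r := by ring
  calc ∑ p ∈ P, rhoNN P r p ^ k
      ≤ ∑ p ∈ P, 2 ^ (k - 1) * (dist p (f p) ^ k + rhoNN {q ∈ P | f q = f p} r (f p) ^ k) :=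
        sum_le_sum fun p hp =>
          rhoNN.pow_le_two_pow_mul_add (filter_subset _ _) (hf p hp) p (f p) k
    _ ≤ 2 ^ (k - 1) * (S + r * S) := by
        rw [← mul_sum, sum_add_distrib]
        gcongr
        exact sum_rhoNN_fiber_pow_le P hr f hf k
    _ = 2 ^ (k - 1) * (1 + r) * S := by ring
    _ ≤ 2 ^ (2 * k + 1) * r * S := mul_le_mul_of_nonneg_right hconst hS

open Classical in
/-- For any partition of `P` into clusters of size at least `r` with centers in the
metric space (encoded by the center assignment `f`), the sum of the `k`-th powers of
the `r`-th nearest neighbor distances is at most `2^(2k+1) · r` times the total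
`k`-th power distance cost; in particular this bounds it against the optimum. -/
theorem stmt4 {X : Type*} [MetricSpace X] (P : Finset X) (r k : ℕ) (hr : 1 ≤ r)
    (hk : 1 ≤ k) (hcard : r ≤ P.card)
    (f : X → X) (hf : ∀ p ∈ P, r ≤ (P.filter fun q => f q = f p).card) :
    ∑ p ∈ P, rhoNN P r p ^ k ≤
      2 ^ (2 * k + 1) * (r : ℝ) * ∑ p ∈ P, dist p (f p) ^ k :=
  stmt4_general P r k hr f hf
end

section
/- Any optimal (or arbitrary) r-gather solution with total k-th power distance cost can be converted into a partition in which every cluster has size in [r, 2r) and the total k-th power distance cost increases by at most a factor 2^k. -/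
/-!
Refine the clusters of `f` into blocks of size in `[r, 2r)`: while a cluster has at least `2r`
points, split off `r` of them. Each block `t`, lying in the cluster of a center `c`, gets as new
center its point `b` closest to `c`; then `dist p b ≤ dist p c + dist b c ≤ 2 * dist p c` for
every `p ∈ t`, and raising to the `k`-th power costs the factor `2 ^ k`.
-/

open Finset

namespace Finpartition

variable {α : Type*} [DecidableEq α] {s : Finset α} {r : ℕ}

theorem exists_card_mem_Ico (hr : 1 ≤ r) (hs : r ≤ #s) :
    ∃ Q : Finpartition s, ∀ t ∈ Q.parts, #t ∈ Set.Ico r (2 * r) := by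
  induction s using Finset.strongInduction with
  | H s ih =>
    by_cases hsmall : #s < 2 * r
    · refine ⟨indiscrete (card_pos.mp (by omega)).ne_empty, fun t ht => ?_⟩
      obtain rfl : t = s := mem_singleton.mp ht
      exact ⟨hs, hsmall⟩
    · obtain ⟨T, hTs, hT⟩ := exists_subset_card_eq hs
      have hTne : T.Nonempty := card_pos.mp (by omega)
      obtain ⟨Q, hQ⟩ :=
        ih (s \ T) (sdiff_ssubset hTs hTne) (by rw [card_sdiff_of_subset hTs]; omega)
      refine ⟨Q.extend hTne.ne_empty sdiff_disjoint (sdiff_sup_cancel hTs), fun t ht => ?_⟩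
      rcases mem_insert.mp ht with rfl | ht
      · exact ⟨hT.ge, by omega⟩
      · exact hQ t ht

theorem exists_le_card_mem_Ico (P : Finpartition s) (hr : 1 ≤ r)
    (hP : ∀ t ∈ P.parts, r ≤ #t) :
    ∃ Q ≤ P, ∀ t ∈ Q.parts, #t ∈ Set.Ico r (2 * r) := by
  choose R hR using fun t (ht : t ∈ P.parts) => exists_card_mem_Ico hr (hP t ht)
  refine ⟨P.bind R, fun t ht => ?_, fun t ht => ?_⟩
  · obtain ⟨u, hu, htu⟩ := mem_bind.mp ht
    exact ⟨u, hu, (R u hu).le htu⟩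
  · obtain ⟨u, hu, htu⟩ := mem_bind.mp ht
    exact hR u hu t htu

theorem part_subset_part_of_le {P Q : Finpartition s} (h : Q ≤ P) {a : α} (ha : a ∈ s) :
    Q.part a ⊆ P.part a := by
  obtain ⟨u, hu, hle⟩ := h (Q.part_mem.mpr ha)
  rwa [P.part_eq_of_mem hu (hle (Q.mem_part_self.mpr ha))]

end Finpartition

section Metric

variable {X : Type*} [PseudoMetricSpace X]

theorem Finset.exists_mem_forall_dist_le_two_mul {t : Finset X} (ht : t.Nonempty) (c : X) :
    ∃ b ∈ t, ∀ p ∈ t, dist p b ≤ 2 * dist p c := by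
  obtain ⟨b, hb, hmin⟩ := t.exists_min_image (dist · c) ht
  refine ⟨b, hb, fun p hp => ?_⟩
  calc dist p b ≤ dist p c + dist b c := dist_triangle_right p b c
    _ ≤ 2 * dist p c := by linarith [hmin p hp]

theorem Finpartition.exists_center_dist_le_two_mul [DecidableEq X] {s : Finset X}
    (Q : Finpartition s) (c : X → X)
    (hc : ∀ p ∈ s, ∀ q ∈ Q.part p, c q = c p) :
    ∃ g : X → X, (∀ p ∈ s, {q ∈ s | g q = g p} = Q.part p) ∧
      ∀ p ∈ s, dist p (g p) ≤ 2 * dist p (c p) := by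
  choose! b hb using fun (t : Finset X) (ht : t.Nonempty) (x : X) =>
    t.exists_mem_forall_dist_le_two_mul ht x
  refine ⟨fun p => b (Q.part p) (c p), fun p hp => ?_, fun p hp => ?_⟩
  · have hbmem : ∀ x ∈ s, b (Q.part x) (c x) ∈ Q.part x := fun x hx =>
      (hb _ (Q.part_nonempty.mpr hx) _).1
    ext q
    rw [mem_filter]
    constructor
    · rintro ⟨hq, hgq : b (Q.part q) (c q) = b (Q.part p) (c p)⟩
      have hpq : Q.part q = Q.part p :=
        Q.eq_of_mem_parts (Q.part_mem.mpr hq) (Q.part_mem.mpr hp) (hgq ▸ hbmem q hq) (hbmem p hp)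
      exact hpq ▸ Q.mem_part_self.mpr hq
    · intro hq
      refine ⟨Q.part_subset p hq, ?_⟩
      simp only [Q.part_eq_of_mem (Q.part_mem.mpr hp) hq, hc p hp q hq]
  · exact (hb _ (Q.part_nonempty.mpr hp) _).2 p (Q.mem_part_self.mpr hp)

end Metric

open Classical in
theorem stmt5_general {X : Type*} [MetricSpace X] (P : Finset X) (r k : ℕ) (hr : 1 ≤ r)
    (f : X → X) (hf : ∀ p ∈ P, r ≤ (P.filter fun q => f q = f p).card) :
    ∃ g : X → X,
      (∀ p ∈ P, r ≤ (P.filter fun q => g q = g p).card ∧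
        (P.filter fun q => g q = g p).card < 2 * r) ∧
      ∑ p ∈ P, dist p (g p) ^ k ≤ 2 ^ k * ∑ p ∈ P, dist p (f p) ^ k := by
  set fibers := Finpartition.ofSetSetoid (Setoid.ker f) P
  have hfibers : ∀ t ∈ fibers.parts, r ≤ #t := by
    simp only [fibers, Finpartition.ofSetSetoid_parts, mem_image]
    rintro _ ⟨p, hp, rfl⟩
    simpa only [Setoid.ker_def, eq_comm] using hf p hp
  obtain ⟨Q, hQ_le, hQ⟩ := fibers.exists_le_card_mem_Ico hr hfibers
  have hfQ : ∀ p ∈ P, ∀ q ∈ Q.part p, f q = f p := fun p hp q hq =>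
    ((Finpartition.mem_part_ofSetSetoid_iff_rel P).mp
      (Finpartition.part_subset_part_of_le hQ_le hp hq)).2.2.symm
  obtain ⟨g, hgQ, hg⟩ := Q.exists_center_dist_le_two_mul f hfQ
  refine ⟨g, fun p hp => hgQ p hp ▸ hQ _ (Q.part_mem.mpr hp), ?_⟩
  rw [mul_sum]
  refine sum_le_sum fun p hp => ?_
  calc dist p (g p) ^ k ≤ (2 * dist p (f p)) ^ k := pow_le_pow_left₀ dist_nonneg (hg p hp) k
    _ = 2 ^ k * dist p (f p) ^ k := mul_pow ..

open Classical in
/-- Any `r`-gather solution (a partition of `P` into clusters of size at least `r`,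
encoded by the center assignment `f`) can be converted into a partition `g` in which
every cluster has size in `[r, 2r)`, increasing the total `k`-th power distance cost
by at most a factor `2^k`. -/
theorem stmt5 {X : Type*} [MetricSpace X] (P : Finset X) (r k : ℕ) (hr : 1 ≤ r)
    (hk : 1 ≤ k) (hcard : r ≤ P.card)
    (f : X → X) (hf : ∀ p ∈ P, r ≤ (P.filter fun q => f q = f p).card) :
    ∃ g : X → X,
      (∀ p ∈ P, r ≤ (P.filter fun q => g q = g p).card ∧
        (P.filter fun q => g q = g p).card < 2 * r) ∧
      ∑ p ∈ P, dist p (g p) ^ k ≤ 2 ^ k * ∑ p ∈ P, dist p (f p) ^ k :=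
  stmt5_general P r k hr f hf
end

section
/- Let S be a subset of P satisfying (mutual exclusivity) no point of P is within distance R of two distinct points of S, and (covering) every point of P is within distance 2R (via a two-hop chain of length-R steps) of some point of S. If additionally every point of S has at least r points of P within distance R, then assigning each point of P to the cluster of a nearest point of S yields clusters of size at least r with radius at most 2R. -/
section NearestCenter

variable {X : Type*} [MetricSpace X] {P S : Finset X} {R : ℝ} {c : X → X}

theorem dist_nearest_le_of_two_hop {p p' q : X} (hnear : ∀ q ∈ S, dist p (c p) ≤ dist p q)
    (hq : q ∈ S) (hpp' : dist p p' ≤ R) (hp'q : dist p' q ≤ R) : dist p (c p) ≤ 2 * R :=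
  calc dist p (c p) ≤ dist p q := hnear q hq
    _ ≤ dist p p' + dist p' q := dist_triangle _ _ _
    _ ≤ 2 * R := by linarith

theorem nearest_eq_of_dist_le
    (hmutex : ∀ q ∈ S, ∀ q' ∈ S, q ≠ q' → ¬ ∃ p ∈ P, dist p q ≤ R ∧ dist p q' ≤ R)
    {p q : X} (hp : p ∈ P) (hcp : c p ∈ S) (hnear : ∀ q ∈ S, dist p (c p) ≤ dist p q)
    (hq : q ∈ S) (hpq : dist p q ≤ R) : c p = q := by
  by_contra hne
  exact hmutex (c p) hcp q hq hne ⟨p, hp, (hnear q hq).trans hpq, hpq⟩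

open Classical in
theorem filter_dist_le_subset_filter_nearest_eq
    (hmutex : ∀ q ∈ S, ∀ q' ∈ S, q ≠ q' → ¬ ∃ p ∈ P, dist p q ≤ R ∧ dist p q' ≤ R)
    (hc : ∀ p ∈ P, c p ∈ S ∧ ∀ q ∈ S, dist p (c p) ≤ dist p q) {q : X} (hq : q ∈ S) :
    P.filter (fun p => dist p q ≤ R) ⊆ P.filter (fun p => c p = q) := by
  intro p hp
  rw [Finset.mem_filter] at hp ⊢
  obtain ⟨hpP, hpq⟩ := hp
  exact ⟨hpP, nearest_eq_of_dist_le hmutex hpP (hc p hpP).1 (hc p hpP).2 hq hpq⟩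

end NearestCenter

open Classical in
theorem stmt10_general {X : Type*} [MetricSpace X] (P : Finset X) (R : ℝ)
    (r : ℕ)
    (S : Finset X)
    (hmutex : ∀ q ∈ S, ∀ q' ∈ S, q ≠ q' → ¬ ∃ p ∈ P, dist p q ≤ R ∧ dist p q' ≤ R)
    (hcov : ∀ p ∈ P, ∃ p' ∈ P, ∃ q ∈ S, dist p p' ≤ R ∧ dist p' q ≤ R)
    (hsize : ∀ q ∈ S, r ≤ (P.filter fun p => dist p q ≤ R).card)
    (c : X → X)
    (hc : ∀ p ∈ P, c p ∈ S ∧ ∀ q ∈ S, dist p (c p) ≤ dist p q) :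
    (∀ q ∈ S, r ≤ (P.filter fun p => c p = q).card) ∧
    (∀ p ∈ P, dist p (c p) ≤ 2 * R) := by
  refine ⟨fun q hq => ?_, fun p hp => ?_⟩
  · exact (hsize q hq).trans
      (Finset.card_le_card (filter_dist_le_subset_filter_nearest_eq hmutex hc hq))
  · obtain ⟨p', -, q, hq, hpp', hp'q⟩ := hcov p hp
    exact dist_nearest_le_of_two_hop (hc p hp).2 hq hpp' hp'q

open Classical in
/-- If `S ⊆ P` satisfies mutual exclusivity (no point of `P` is within distance `R` of
two distinct points of `S`) and covering (every point of `P` reaches `S` by a two-hop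
chain of length-`R` steps), and every `s ∈ S` has at least `r` points of `P` within
distance `R`, then assigning each point of `P` to a nearest point of `S` yields
clusters of size at least `r` and radius at most `2R`. -/
theorem stmt10 {X : Type*} [MetricSpace X] (P : Finset X) (R : ℝ) (hR : 0 < R)
    (r : ℕ) (hr : 1 ≤ r)
    (S : Finset X) (hSP : S ⊆ P)
    (hmutex : ∀ q ∈ S, ∀ q' ∈ S, q ≠ q' → ¬ ∃ p ∈ P, dist p q ≤ R ∧ dist p q' ≤ R)
    (hcov : ∀ p ∈ P, ∃ p' ∈ P, ∃ q ∈ S, dist p p' ≤ R ∧ dist p' q ≤ R)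
    (hsize : ∀ q ∈ S, r ≤ (P.filter fun p => dist p q ≤ R).card)
    (c : X → X)
    (hc : ∀ p ∈ P, c p ∈ S ∧ ∀ q ∈ S, dist p (c p) ≤ dist p q) :
    (∀ q ∈ S, r ≤ (P.filter fun p => c p = q).card) ∧
    (∀ p ∈ P, dist p (c p) ≤ 2 * R) :=
  stmt10_general P R r S hmutex hcov hsize c hc
end

section
/- In the pointwise r-gather algorithm, after the i-th phase (at scale R_i = 2^i * delta), every cluster in the current family has radius at most 2 * beta * C * R_i. -/
/-- The subgraph of the `k`-th power of `G` induced by the vertex set `A`. -/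
def inducedPower {V : Type*} (G : SimpleGraph V) (A : Set V) (k : ℕ) : SimpleGraph V where
  Adj u v := u ≠ v ∧ u ∈ A ∧ v ∈ A ∧ withinDist G k u v
  symm := by
    constructor
    rintro u v ⟨h1, h2, h3, w, hw⟩
    exact ⟨h1.symm, h3, h2, w.reverse, by simpa using hw⟩
  loopless := by constructor; rintro u ⟨h1, -⟩; exact h1 rfl

/-!
Induction on the phase `i`, with the invariant that clusters existing at the start of phase `i`
have radius at most `β·C·R_i`. In phase `i` a new cluster is reached from its center by at most
`2β` edges of `G_i`, each of length at most `C·R_i`; a point appended to an old cluster is one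
edge away from a member of it, so its distance to the center is at most `C·R_i + β·C·R_i`.
Since `2β·C·R_i = β·C·R_{i+1}`, the invariant propagates.
-/

theorem dist_le_walk_length_mul {X : Type*} [PseudoMetricSpace X]
    {G : SimpleGraph X} {L : ℝ} (hG : ∀ p q, G.Adj p q → dist p q ≤ L) {u v : X}
    (w : G.Walk u v) : dist u v ≤ w.length * L := by
  induction w with
  | nil => simp
  | @cons u v x huv w ih =>
    calc dist u x ≤ dist u v + dist v x := dist_triangle u v x
      _ ≤ L + w.length * L := add_le_add (hG u v huv) ih
      _ = (w.cons huv).length * L := by rw [SimpleGraph.Walk.length_cons]; push_cast; ring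

theorem withinDist.dist_le_mul {X : Type*} [PseudoMetricSpace X] {G : SimpleGraph X}
    {L : ℝ} {k : ℕ} {u v : X} (hL : 0 ≤ L) (hG : ∀ p q, G.Adj p q → dist p q ≤ L)
    (h : withinDist G k u v) : dist u v ≤ k * L := by
  obtain ⟨w, hw⟩ := h
  calc dist u v ≤ w.length * L := dist_le_walk_length_mul hG w
    _ ≤ k * L := by gcongr

/-- A phase of the algorithm, taking the center assignment `c` to `c'`; `A` stands for `P'_i`
and `N` for `P'''_i`. -/
structure IsGatherPhase {X : Type*} (G : SimpleGraph X) (β : ℕ) (A N : Set X)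
    (c c' : X → Option X) : Prop where
  new_cluster : ∀ p ∈ N, ∃ s, c' p = some s ∧ withinDist G (2 * β) p s
  join : ∀ p ∈ A, c p = none → p ∉ N → ∃ q, G.Adj p q ∧ (c q).isSome ∧ c' p = c q
  keep : ∀ p s, c p = some s → c' p = some s
  rest : ∀ p, c p = none → p ∉ N → p ∉ A → c' p = none

namespace IsGatherPhase

variable {X : Type*} {G : SimpleGraph X} {β : ℕ} {A N : Set X} {c c' : X → Option X}

theorem eq_some_cases (h : IsGatherPhase G β A N c c') {p s : X} (hp : c' p = some s) :
    c p = some s ∨ withinDist G (2 * β) p s ∨ ∃ q, G.Adj p q ∧ c q = some s := by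
  rcases hc : c p with _ | t
  · by_cases hN : p ∈ N
    · obtain ⟨t, ht, hw⟩ := h.new_cluster p hN
      rw [hp, Option.some_inj] at ht
      exact .inr (.inl (ht ▸ hw))
    by_cases hA : p ∈ A
    · obtain ⟨q, hpq, -, hq⟩ := h.join p hA hc hN
      exact .inr (.inr ⟨q, hpq, hq ▸ hp⟩)
    · simp [h.rest p hc hN hA] at hp
  · have ht := h.keep p t hc
    rw [hp, Option.some_inj] at ht
    exact .inl (ht ▸ rfl)

theorem dist_le [PseudoMetricSpace X] (h : IsGatherPhase G β A N c c') {L : ℝ}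
    (hL : 0 ≤ L) (hβ : 1 ≤ β) (hG : ∀ p q, G.Adj p q → dist p q ≤ L)
    (hc : ∀ p s, c p = some s → dist p s ≤ β * L) {p s : X} (hp : c' p = some s) :
    dist p s ≤ 2 * β * L := by
  have hβL : L ≤ β * L := le_mul_of_one_le_left hL (by exact_mod_cast hβ)
  rcases h.eq_some_cases hp with hold | hnew | ⟨q, hpq, hq⟩
  · linarith [hc p s hold]
  · exact_mod_cast hnew.dist_le_mul hL hG
  · linarith [dist_triangle p q s, hG p q hpq, hc q s hq]

end IsGatherPhase

open Classical in
/-- `c i` is the partial center assignment at the start of phase `i`, so `c (i + 1)` is the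
assignment after phase `i`. -/
theorem stmt11_general {X : Type*} [MetricSpace X]
    (P : Finset X)
    (C : ℝ) (hC : 1 ≤ C) (β : ℕ) (hβ : 1 ≤ β) (δ : ℝ) (hδ : 0 < δ)
    (G : ℕ → SimpleGraph X)
    (c : ℕ → X → Option X)
    (Pp Pppp : ℕ → Finset X) (S : ℕ → Finset X)
    -- `G i` is a `C`-approximate `(R_i, r)`-near neighbor graph of `P`
    (hG1 : ∀ i p q, (G i).Adj p q → dist p q ≤ C * (2 ^ i * δ))
    -- no point is clustered initially, and points outside `P` are never clustered
    (hinit : ∀ p, c 0 p = Option.none)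
    -- each point of `P'''_i` joins the cluster of a closest member of `S i`
    (hU2 : ∀ i, ∀ p ∈ Pppp i, ∃ s ∈ S i, c (i + 1) p = some s ∧
      withinDist (G i) (2 * β) p s ∧
      ∀ s' ∈ S i, ∀ m : ℕ, withinDist (G i) m p s' → withinDist (G i) m p s)
    -- each unclustered point of `P'_i \ P'''_i` joins an adjacent existing cluster
    (hU3 : ∀ i, ∀ p ∈ Pp i, c i p = Option.none → p ∉ Pppp i →
      ∃ q ∈ P, (G i).Adj p q ∧ (c i q).isSome ∧ c (i + 1) p = c i q)
    -- already clustered points keep their centers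
    (hU4 : ∀ i p s, c i p = some s → c (i + 1) p = some s)
    -- no other point is clustered in phase `i`
    (hU5 : ∀ i p, c i p = Option.none → p ∉ Pppp i → p ∉ Pp i →
      c (i + 1) p = Option.none) :
    ∀ i, ∀ p s, c (i + 1) p = some s → dist p s ≤ 2 * β * C * (2 ^ i * δ) := by
  have phase : ∀ i, IsGatherPhase (G i) β ↑(Pp i) ↑(Pppp i) (c i) (c (i + 1)) := fun i =>
    { new_cluster := fun p hp => (hU2 i p hp).imp fun _ ⟨_, hs, hw, _⟩ => ⟨hs, hw⟩
      join := fun p hp h0 hN => (hU3 i p hp h0 hN).imp fun _ ⟨_, hq⟩ => hq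
      keep := hU4 i
      rest := hU5 i }
  have hL : ∀ i, 0 ≤ C * (2 ^ i * δ) := fun i => by positivity
  have radius : ∀ i p s, c i p = some s → dist p s ≤ β * (C * (2 ^ i * δ)) := by
    intro i
    induction i with
    | zero => simp [hinit]
    | succ i ih =>
      intro p s hp
      calc dist p s ≤ 2 * β * (C * (2 ^ i * δ)) := (phase i).dist_le (hL i) hβ (hG1 i) ih hp
        _ = β * (C * (2 ^ (i + 1) * δ)) := by ring
  intro i p s hp
  calc dist p s ≤ 2 * β * (C * (2 ^ i * δ)) := (phase i).dist_le (hL i) hβ (hG1 i) (radius i) hp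
    _ = 2 * β * C * (2 ^ i * δ) := by ring

open Classical in
/-- Pointwise `r`-gather algorithm (Algorithm 4), radius invariant: after phase `i`
(at scale `R_i = 2^i·δ`), every cluster of the current family has radius at most
`2·β·C·R_i`.  Here `c i` is the partial center assignment at the start of phase `i`
(so `c (i+1)` is the assignment after phase `i`), and the hypotheses describe the
phases of the algorithm. -/
theorem stmt11 {X : Type*} [MetricSpace X]
    (P : Finset X) (r : ℕ) (hr : 1 ≤ r)
    (C : ℝ) (hC : 1 ≤ C) (β : ℕ) (hβ : 1 ≤ β) (δ : ℝ) (hδ : 0 < δ)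
    (G : ℕ → SimpleGraph X)
    (c : ℕ → X → Option X)
    (Pp Ppp Pppp : ℕ → Finset X) (S : ℕ → Finset X)
    -- `G i` is a `C`-approximate `(R_i, r)`-near neighbor graph of `P`
    (hGP : ∀ i p q, (G i).Adj p q → p ∈ P ∧ q ∈ P)
    (hG1 : ∀ i p q, (G i).Adj p q → dist p q ≤ C * (2 ^ i * δ))
    (hG2 : ∀ i, ∀ p ∈ P,
      r ≤ (P.filter fun q => (G i).Adj p q ∨ q = p).card ∨
      ∀ q ∈ P, dist p q ≤ 2 ^ i * δ → ((G i).Adj p q ∨ q = p))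
    -- `P'_i`: vertices with at least `r` vertices in their closed `G i`-neighborhood
    (hPp : ∀ i, Pp i = P.filter fun p =>
      r ≤ (P.filter fun q => (G i).Adj p q ∨ q = p).card)
    -- `P''_i`: vertices of `P'_i` whose closed neighborhood is entirely unclustered
    (hPpp : ∀ i, Ppp i = (Pp i).filter fun p =>
      ∀ q ∈ P, ((G i).Adj p q ∨ q = p) → c i q = Option.none)
    -- `S i` is a `β`-ruling set of `(G_i²)[P''_i]`
    (hS1 : ∀ i, S i ⊆ Ppp i)
    (hS2 : ∀ i, ∀ s ∈ S i, ∀ s' ∈ S i, s ≠ s' →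
      ¬ (inducedPower (G i) (↑(Ppp i)) 2).Adj s s')
    (hS3 : ∀ i, ∀ p ∈ Ppp i, ∃ s ∈ S i,
      withinDist (inducedPower (G i) (↑(Ppp i)) 2) β p s)
    -- `P'''_i`: unclustered points at `G i`-distance at most `2β` from `S i`
    (hPppp : ∀ i, Pppp i = P.filter fun p =>
      c i p = Option.none ∧ ∃ s ∈ S i, withinDist (G i) (2 * β) p s)
    -- no point is clustered initially, and points outside `P` are never clustered
    (hinit : ∀ p, c 0 p = Option.none)
    (hout : ∀ i p, p ∉ P → c i p = Option.none)
    -- phase `i`: each point of `S i` becomes the center of a new cluster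
    (hU1 : ∀ i, ∀ s ∈ S i, c (i + 1) s = some s)
    -- each point of `P'''_i` joins the cluster of a closest member of `S i`
    (hU2 : ∀ i, ∀ p ∈ Pppp i, ∃ s ∈ S i, c (i + 1) p = some s ∧
      withinDist (G i) (2 * β) p s ∧
      ∀ s' ∈ S i, ∀ m : ℕ, withinDist (G i) m p s' → withinDist (G i) m p s)
    -- each unclustered point of `P'_i \ P'''_i` joins an adjacent existing cluster
    (hU3 : ∀ i, ∀ p ∈ Pp i, c i p = Option.none → p ∉ Pppp i →
      ∃ q ∈ P, (G i).Adj p q ∧ (c i q).isSome ∧ c (i + 1) p = c i q)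
    -- already clustered points keep their centers
    (hU4 : ∀ i p s, c i p = some s → c (i + 1) p = some s)
    -- no other point is clustered in phase `i`
    (hU5 : ∀ i p, c i p = Option.none → p ∉ Pppp i → p ∉ Pp i →
      c (i + 1) p = Option.none) :
    ∀ i, ∀ p s, c (i + 1) p = some s → dist p s ≤ 2 * β * C * (2 ^ i * δ) :=
  stmt11_general P C hC β hβ δ hδ G c Pp Pppp S hG1 hinit hU2 hU3 hU4 hU5
end

section
/- In the incremental r-gather algorithm, the maintained net N_i at every level i satisfies: any two distinct points of N_i are at distance greater than 4*C*2^i, and every point of the current point set is within distance 4*C^2*2^i of N_i. -/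
/-! If `p` joins the net, the oracle certifies that it is far from every old net point, so
separation survives, and `p` covers itself. If `p` is rejected, the net is unchanged and the
oracle's witness covers `p`. -/

section

variable {X : Type*} [PseudoMetricSpace X]

theorem sep_insert_of_forall_lt_dist [DecidableEq X] {r : ℝ} {N : Finset X} {p : X}
    (hsep : ∀ u ∈ N, ∀ v ∈ N, u ≠ v → r < dist u v) (hfar : ∀ q ∈ N, r < dist p q) :
    ∀ u ∈ insert p N, ∀ v ∈ insert p N, u ≠ v → r < dist u v := by
  simp only [Finset.mem_insert]
  rintro u (rfl | hu) v (rfl | hv) huv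
  · exact absurd rfl huv
  · exact hfar v hv
  · exact dist_comm v u ▸ hfar u hu
  · exact hsep u hu v hv huv

theorem cov_insert_of_exists_dist_le [DecidableEq X] {R : ℝ} {P N : Finset X} {p : X}
    (hcov : ∀ u ∈ P, ∃ v ∈ N, dist u v ≤ R) (hp : ∃ q ∈ N, dist p q ≤ R) :
    ∀ u ∈ insert p P, ∃ v ∈ N, dist u v ≤ R := by
  intro u hu
  rcases Finset.mem_insert.1 hu with rfl | hu
  · exact hp
  · exact hcov u hu

theorem cov_insert_insert [DecidableEq X] {R : ℝ} (hR : 0 ≤ R) {P N : Finset X} (p : X)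
    (hcov : ∀ u ∈ P, ∃ v ∈ N, dist u v ≤ R) :
    ∀ u ∈ insert p P, ∃ v ∈ insert p N, dist u v ≤ R := by
  refine cov_insert_of_exists_dist_le (fun u hu => ?_) ⟨p, Finset.mem_insert_self p N, by simpa⟩
  obtain ⟨v, hv, hd⟩ := hcov u hu
  exact ⟨v, Finset.mem_insert_of_mem hv, hd⟩

end

theorem stmt17_general {X : Type*} [MetricSpace X] (C : ℝ) (i : ℕ)
    (P N : Finset X)
    (hsep : ∀ u ∈ N, ∀ v ∈ N, u ≠ v → 4 * C * 2 ^ i < dist u v)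
    (hcov : ∀ u ∈ P, ∃ v ∈ N, dist u v ≤ 4 * C ^ 2 * 2 ^ i)
    (p : X) (N' : Finset X) [DecidableEq X]
    (hbranch :
      (N' = insert p N ∧ ∀ q ∈ N, 4 * C * 2 ^ i < dist p q) ∨
      (N' = N ∧ ∃ q ∈ N, dist p q ≤ 4 * C ^ 2 * 2 ^ i)) :
    (∀ u ∈ N', ∀ v ∈ N', u ≠ v → 4 * C * 2 ^ i < dist u v) ∧
    (∀ u ∈ insert p P, ∃ v ∈ N', dist u v ≤ 4 * C ^ 2 * 2 ^ i) := by
  rcases hbranch with ⟨rfl, hfar⟩ | ⟨rfl, hnear⟩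
  · exact ⟨sep_insert_of_forall_lt_dist hsep hfar, cov_insert_insert (by positivity) p hcov⟩
  · exact ⟨hsep, cov_insert_of_exists_dist_le hcov hnear⟩

/-- Incremental `r`-gather algorithm, net invariant at level `i`: if before an
insertion the net `N` satisfies separation (pairwise distances `> 4·C·2^i`) and
covering (every point of `P` within `4·C²·2^i` of `N`), and a point `p` is inserted —
either joining the net (certified by the approximate nearest neighbor oracle:
all net points at distance `> 4·C·2^i`) or not (certified: some net point at distance
`≤ 4·C²·2^i`) — then the new net `N'` satisfies the same separation and covering
invariants for `P ∪ {p}`. -/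
theorem stmt17 {X : Type*} [MetricSpace X] (C : ℝ) (hC : 1 ≤ C) (i : ℕ)
    (P N : Finset X) (hNP : N ⊆ P)
    (hsep : ∀ u ∈ N, ∀ v ∈ N, u ≠ v → 4 * C * 2 ^ i < dist u v)
    (hcov : ∀ u ∈ P, ∃ v ∈ N, dist u v ≤ 4 * C ^ 2 * 2 ^ i)
    (p : X) (N' : Finset X) [DecidableEq X]
    (hbranch :
      (N' = insert p N ∧ ∀ q ∈ N, 4 * C * 2 ^ i < dist p q) ∨
      (N' = N ∧ ∃ q ∈ N, dist p q ≤ 4 * C ^ 2 * 2 ^ i)) :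
    (∀ u ∈ N', ∀ v ∈ N', u ≠ v → 4 * C * 2 ^ i < dist u v) ∧
    (∀ u ∈ insert p P, ∃ v ∈ N', dist u v ≤ 4 * C ^ 2 * 2 ^ i) :=
  stmt17_general C i P N hsep hcov p N' hbranch
end

section
/- In the incremental r-gather algorithm, after any operation, for every level i and every center u in N_i, the maintained set Q_i(u) satisfies Q_i(u) is a subset of the points within distance 2*C*2^i of u, and |Q_i(u)| >= min(r, number of points of P within distance 2*2^i of u). -/
/-!
A net point `u` keeps its counter under the insertion of `p` unless `p` is within `2·2^i` of
`u`. If `p` becomes a new net point, it is more than `4C·2^i` from the old net, so every point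
within `2·2^i` of `p` lies more than `2C·2^i` from the old net and hence sat in the pool `U`,
from which `p` pulled its counter. Otherwise, by the separation of the net, the only net point
that can lie within `2·2^i` of `p` is its `C`-approximate nearest neighbour `q`, and only `Q q`
grows, by `p` itself.
-/

namespace Finset

variable {α : Type*} [DecidableEq α]

theorem card_filter_insert_le (s : Finset α) (a : α) (f : α → Prop) [DecidablePred f] :
    #((insert a s).filter f) ≤ #(s.filter f) + 1 := by
  rw [filter_insert]
  split_ifs
  · exact card_insert_le _ _
  · exact Nat.le_succ _

end Finset

open Finset

section GatherCounter

variable {X : Type*} [MetricSpace X] [DecidableEq X] {r : ℕ} {ρ R : ℝ}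
  {P S : Finset X} {p u : X}

def IsCounter (r : ℕ) (ρ R : ℝ) (P : Finset X) (u : X) (S : Finset X) : Prop :=
  (∀ q ∈ S, q ∈ P ∧ dist q u ≤ R) ∧ min r #(P.filter fun q => dist q u ≤ ρ) ≤ #S

theorem IsCounter.insert_of_lt_dist (h : IsCounter r ρ R P u S) (hpu : ρ < dist p u) :
    IsCounter r ρ R (insert p P) u S := by
  refine ⟨fun q hq => ⟨mem_insert_of_mem (h.1 q hq).1, (h.1 q hq).2⟩, ?_⟩
  rw [filter_insert, if_neg hpu.not_ge]
  exact h.2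

theorem IsCounter.insert_insert (h : IsCounter r ρ R P u S) (hp : p ∉ P) (hpu : dist p u ≤ R) :
    IsCounter r ρ R (insert p P) u (insert p S) := by
  refine ⟨fun q hq => ?_, ?_⟩
  · rcases mem_insert.1 hq with rfl | hq
    · exact ⟨mem_insert_self _ _, hpu⟩
    · exact ⟨mem_insert_of_mem (h.1 q hq).1, (h.1 q hq).2⟩
  · have hpS : p ∉ S := fun hpS => hp (h.1 p hpS).1
    rw [card_insert_of_notMem hpS]
    have := card_filter_insert_le P p fun q => dist q u ≤ ρ
    have := h.2
    omega

theorem isCounter_insert_self {W : Finset X} (hR : 0 ≤ R) (hWP : W ⊆ P)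
    (hW : ∀ w ∈ W, dist w p ≤ R)
    (hfull : r ≤ #(insert p W) ∨ ∀ t ∈ P, dist t p ≤ ρ → t ∈ W) :
    IsCounter r ρ R (insert p P) p (insert p W) := by
  refine ⟨fun q hq => ?_, ?_⟩
  · rcases mem_insert.1 hq with rfl | hq
    · exact ⟨mem_insert_self _ _, by simpa using hR⟩
    · exact ⟨mem_insert_of_mem (hWP hq), hW q hq⟩
  rcases hfull with hr | hfull
  · exact (min_le_left _ _).trans hr
  refine (min_le_right _ _).trans (card_le_card fun t ht => ?_)
  obtain ⟨ht, htp⟩ := mem_filter.1 ht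
  rcases mem_insert.1 ht with rfl | ht
  · exact mem_insert_self _ _
  · exact mem_insert_of_mem (hfull t ht htp)

end GatherCounter

section NetGeometry

variable {X : Type*} [MetricSpace X] {N : Set X} {p q u : X} {C ρ δ : ℝ}

theorem eq_of_dist_le_of_approxNearest (hsep : ∀ u ∈ N, ∀ v ∈ N, u ≠ v → δ < dist u v)
    (hC : 0 ≤ C) (hδ : (1 + C) * ρ ≤ δ) (hq : q ∈ N)
    (hann : ∀ v ∈ N, dist p q ≤ C * dist p v) (hu : u ∈ N) (hpu : dist p u ≤ ρ) : u = q := by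
  by_contra hne
  have hpq : dist p q ≤ C * ρ := (hann u hu).trans (mul_le_mul_of_nonneg_left hpu hC)
  have := dist_triangle_left u q p
  linarith [hsep u hu q hq hne]

theorem mem_pool_of_dist_le_of_far {N U P : Finset X} {t : X} {R : ℝ}
    (hpool : ∀ q ∈ P, q ∉ N → (∀ u ∈ N, R < dist q u) → q ∈ U)
    (hfar : ∀ u ∈ N, δ < dist p u) (hR : 0 ≤ R) (hδ : ρ + R ≤ δ)
    (ht : t ∈ P) (htp : dist t p ≤ ρ) : t ∈ U := by
  refine hpool t ht (fun htN => ?_) fun v hv => ?_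
  · linarith [hfar t htN, dist_comm t p]
  · linarith [hfar v hv, dist_triangle_left p v t]

end NetGeometry

open Classical in
theorem stmt18_general {X : Type*} [MetricSpace X] (C : ℝ) (hC : 1 ≤ C) (i r : ℕ)
    (P N U : Finset X) (Q : X → Finset X)
    (hUP : U ⊆ P)
    -- net invariants
    (hsep : ∀ u ∈ N, ∀ v ∈ N, u ≠ v → 4 * C * 2 ^ i < dist u v)
    -- pool invariant: unassigned far points are in `U`
    (hUinv : ∀ q ∈ P, q ∉ N → (∀ u ∈ N, 2 * C * 2 ^ i < dist q u) → q ∈ U)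
    -- counter invariants before the insertion
    (hQsub : ∀ u ∈ N, ∀ q ∈ Q u, q ∈ P ∧ dist q u ≤ 2 * C * 2 ^ i)
    (hQcard : ∀ u ∈ N,
      min r (P.filter fun q => dist q u ≤ 2 * 2 ^ i).card ≤ (Q u).card)
    (p : X) (hp : p ∉ P)
    (N' U' : Finset X) (Q' : X → Finset X)
    (hbranch :
      -- branch (a): `p` joins the net and pulls close pool points into `Q' p`
      (N' = insert p N ∧ (∀ u ∈ N, 4 * C * 2 ^ i < dist p u) ∧
        (∀ u ∈ N, Q' u = Q u) ∧
        ∃ W ⊆ U, (∀ w ∈ W, dist w p ≤ 2 * C * 2 ^ i) ∧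
          Q' p = insert p W ∧ U' = U \ W ∧
          (r ≤ (Q' p).card ∨ ∀ u ∈ U \ W, 2 * 2 ^ i < dist u p)) ∨
      -- branch (b): `p` does not join the net; `q` is its `C`-approximate nearest
      -- neighbor in `N`
      (N' = N ∧ ∃ q ∈ N, (∀ u ∈ N, dist p q ≤ C * dist p u) ∧
        ((dist p q ≤ 2 * C * 2 ^ i ∧ Q' q = insert p (Q q) ∧
            (∀ u ∈ N, u ≠ q → Q' u = Q u) ∧ U' = U) ∨
         ((∀ u ∈ N, 2 * 2 ^ i < dist p u) ∧ U' = insert p U ∧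
            ∀ u ∈ N, Q' u = Q u)))) :
    (∀ u ∈ N', ∀ q ∈ Q' u, q ∈ insert p P ∧ dist q u ≤ 2 * C * 2 ^ i) ∧
    (∀ u ∈ N',
      min r ((insert p P).filter fun q => dist q u ≤ 2 * 2 ^ i).card ≤ (Q' u).card) := by
  have h2i : (0 : ℝ) < 2 ^ i := by positivity
  have hR : 0 ≤ 2 * C * 2 ^ i := by nlinarith
  have hρR : 2 * 2 ^ i + 2 * C * 2 ^ i ≤ 4 * C * 2 ^ i := by nlinarith
  have hQ : ∀ u ∈ N, IsCounter r (2 * 2 ^ i) (2 * C * 2 ^ i) P u (Q u) :=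
    fun u hu => ⟨hQsub u hu, hQcard u hu⟩
  suffices h : ∀ u ∈ N', IsCounter r (2 * 2 ^ i) (2 * C * 2 ^ i) (insert p P) u (Q' u) from
    ⟨fun u hu => (h u hu).1, fun u hu => (h u hu).2⟩
  rcases hbranch with ⟨rfl, hfar, hQeq, W, hWU, hWd, hQp, -, hfull⟩ |
    ⟨hN, q, hq, hann, ⟨hpq, hQq, hQo, -⟩ | ⟨hfar, -, hQo⟩⟩
  · intro u hu
    rcases mem_insert.1 hu with rfl | hu
    · rw [hQp] at hfull ⊢
      refine isCounter_insert_self hR (hWU.trans hUP) hWd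
        (hfull.imp_right fun hfarW t ht htp => ?_)
      by_contra htW
      have htU := mem_pool_of_dist_le_of_far hUinv hfar hR hρR ht htp
      exact (hfarW t (mem_sdiff.2 ⟨htU, htW⟩)).not_ge htp
    · rw [hQeq u hu]
      exact (hQ u hu).insert_of_lt_dist (by linarith [hfar u hu])
  · intro u hu
    rw [hN] at hu
    by_cases huq : u = q
    · subst huq
      rw [hQq]
      exact (hQ u hu).insert_insert hp hpq
    · rw [hQo u hu huq]
      refine (hQ u hu).insert_of_lt_dist (lt_of_not_ge fun hpu => huq ?_)
      exact eq_of_dist_le_of_approxNearest hsep (by linarith) (by linarith) hq hann hu hpu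
  · intro u hu
    rw [hN] at hu
    rw [hQo u hu]
    exact (hQ u hu).insert_of_lt_dist (hfar u hu)

open Classical in
/-- Incremental `r`-gather algorithm, counter invariant at level `i`: given the net
invariants for `N`, the pool invariant for `U`, and the counter invariants for `Q`
(each `Q u` lies in `P` within distance `2·C·2^i` of `u` and has size at least
`min(r, |P ∩ ball(u, 2·2^i)|)`), inserting a point `p` — with the two branches of
Algorithm 8 certified by the `C`-approximate nearest neighbor oracle — preserves the
counter invariants for the new state `(insert p P, N', U', Q')`. -/
theorem stmt18 {X : Type*} [MetricSpace X] (C : ℝ) (hC : 1 ≤ C) (i r : ℕ)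
    (P N U : Finset X) (Q : X → Finset X)
    (hNP : N ⊆ P) (hUP : U ⊆ P)
    -- net invariants
    (hsep : ∀ u ∈ N, ∀ v ∈ N, u ≠ v → 4 * C * 2 ^ i < dist u v)
    (hcov : ∀ q ∈ P, ∃ u ∈ N, dist q u ≤ 4 * C ^ 2 * 2 ^ i)
    -- pool invariant: unassigned far points are in `U`
    (hUinv : ∀ q ∈ P, q ∉ N → (∀ u ∈ N, 2 * C * 2 ^ i < dist q u) → q ∈ U)
    -- counter invariants before the insertion
    (hQsub : ∀ u ∈ N, ∀ q ∈ Q u, q ∈ P ∧ dist q u ≤ 2 * C * 2 ^ i)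
    (hQcard : ∀ u ∈ N,
      min r (P.filter fun q => dist q u ≤ 2 * 2 ^ i).card ≤ (Q u).card)
    (p : X) (hp : p ∉ P)
    (N' U' : Finset X) (Q' : X → Finset X)
    (hbranch :
      -- branch (a): `p` joins the net and pulls close pool points into `Q' p`
      (N' = insert p N ∧ (∀ u ∈ N, 4 * C * 2 ^ i < dist p u) ∧
        (∀ u ∈ N, Q' u = Q u) ∧
        ∃ W ⊆ U, (∀ w ∈ W, dist w p ≤ 2 * C * 2 ^ i) ∧
          Q' p = insert p W ∧ U' = U \ W ∧
          (r ≤ (Q' p).card ∨ ∀ u ∈ U \ W, 2 * 2 ^ i < dist u p)) ∨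
      -- branch (b): `p` does not join the net; `q` is its `C`-approximate nearest
      -- neighbor in `N`
      (N' = N ∧ ∃ q ∈ N, (∀ u ∈ N, dist p q ≤ C * dist p u) ∧
        ((dist p q ≤ 2 * C * 2 ^ i ∧ Q' q = insert p (Q q) ∧
            (∀ u ∈ N, u ≠ q → Q' u = Q u) ∧ U' = U) ∨
         ((∀ u ∈ N, 2 * 2 ^ i < dist p u) ∧ U' = insert p U ∧
            ∀ u ∈ N, Q' u = Q u)))) :
    (∀ u ∈ N', ∀ q ∈ Q' u, q ∈ insert p P ∧ dist q u ≤ 2 * C * 2 ^ i) ∧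
    (∀ u ∈ N',
      min r ((insert p P).filter fun q => dist q u ≤ 2 * 2 ^ i).card ≤ (Q' u).card) :=
  stmt18_general C hC i r P N U Q hUP hsep hUinv hQsub hQcard p hp N' U' Q' hbranch
end

section
/- In the incremental r-gather algorithm, querying every point at the minimal level i* such that all counters satisfy |Q_{i*}(q)| >= r yields a clustering where every cluster has size at least r and maximum radius at most 4*C^3*2^{i*} <= 8*C^3*rho*(P), i.e., an O(C^3)-approximate r-gather solution. -/
/-!
Counters lie in balls of radius `2C·2^i` around centers that are more than `4C·2^i` apart, so
every point of the counter of `u` is assigned to `u`, and a full counter yields a cluster of size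
at least `r`. A point lying in a counter is within `2C·2^i` of its center; any other point is sent
to a `C`-approximate nearest center, hence within `C · 4C²·2^i`.

In an `r`-gather clustering of cost `ρ` each cluster has diameter at most `2ρ`, so every point has
at least `r` points within distance `2ρ`. If `2^{i*} > 2ρ`, then at level `i* - 1` all counters
would already be full, contradicting minimality; for `i* = 0` a cluster contains two distinct
points, at distance at least `1`, so again `2^{i*} = 1 ≤ 2ρ`.
-/

theorem eq_of_dist_le_of_separated {X : Type*} [PseudoMetricSpace X] {N : Finset X} {δ : ℝ}
    (hsep : ∀ u ∈ N, ∀ v ∈ N, u ≠ v → 2 * δ < dist u v) {u v q : X} (hu : u ∈ N) (hv : v ∈ N)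
    (hqu : dist q u ≤ δ) (hqv : dist q v ≤ δ) : u = v := by
  by_contra huv
  have := hsep u hu v hv huv
  have := dist_triangle_left u v q
  linarith

namespace RGather

variable {X : Type*} [PseudoMetricSpace X] {P N : Finset X}

theorem counter_subset_cluster [DecidableEq X] {Q : X → Finset X} {c : X → X} {δ : ℝ}
    (hsep : ∀ u ∈ N, ∀ v ∈ N, u ≠ v → 2 * δ < dist u v)
    (hQ : ∀ u ∈ N, ∀ q ∈ Q u, q ∈ P ∧ dist q u ≤ δ)
    (hc : ∀ p ∈ P, (∃ v ∈ N, p ∈ Q v ∧ c p = v) ∨ ∀ v ∈ N, p ∉ Q v)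
    {u : X} (hu : u ∈ N) : Q u ⊆ P.filter fun p => c p = u := by
  intro q hq
  obtain ⟨hqP, hqu⟩ := hQ u hu q hq
  refine Finset.mem_filter.2 ⟨hqP, ?_⟩
  rcases hc q hqP with ⟨v, hv, hqv, hcv⟩ | hnone
  · rw [hcv]; exact eq_of_dist_le_of_separated hsep hv hu (hQ v hv q hqv).2 hqu
  · exact absurd hq (hnone u hu)

theorem dist_center_le {Q : X → Finset X} {c : X → X} {C R δ : ℝ} (hC : 0 ≤ C)
    (hQ : ∀ u ∈ N, ∀ q ∈ Q u, dist q u ≤ δ) (hcov : ∀ p ∈ P, ∃ u ∈ N, dist p u ≤ R)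
    (hc : ∀ p ∈ P, (∃ v ∈ N, p ∈ Q v ∧ c p = v) ∨ ∀ v ∈ N, dist p (c p) ≤ C * dist p v)
    {p : X} (hp : p ∈ P) : dist p (c p) ≤ max δ (C * R) := by
  rcases hc p hp with ⟨v, hv, hpv, rfl⟩ | happrox
  · exact le_max_of_le_left (hQ _ hv p hpv)
  · obtain ⟨u, hu, hpu⟩ := hcov p hp
    exact le_max_of_le_right ((happrox u hu).trans (mul_le_mul_of_nonneg_left hpu hC))

section Cost

variable [DecidableEq X] {f : X → X} {r : ℕ} {ρ : ℝ}

theorem le_card_filter_dist_le_two_mul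
    (hf : ∀ p ∈ P, r ≤ (P.filter fun q => f q = f p).card) (hρ : ∀ q ∈ P, dist q (f q) ≤ ρ)
    {p : X} (hp : p ∈ P) :
    r ≤ (P.filter fun q => dist q p ≤ 2 * ρ).card := by
  refine (hf p hp).trans (Finset.card_le_card fun q hq => ?_)
  obtain ⟨hqP, hqf⟩ := Finset.mem_filter.1 hq
  refine Finset.mem_filter.2 ⟨hqP, ?_⟩
  calc dist q p ≤ dist q (f q) + dist (f p) p := by rw [hqf]; exact dist_triangle _ _ _
    _ ≤ ρ + ρ := add_le_add (hρ q hqP) (by rw [dist_comm]; exact hρ p hp)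
    _ = 2 * ρ := by ring

theorem one_le_two_mul_cost
    (hf : ∀ p ∈ P, r ≤ (P.filter fun q => f q = f p).card) (hρ : ∀ q ∈ P, dist q (f q) ≤ ρ)
    (hne : P.Nonempty) (hr : 2 ≤ r)
    (hmindist : ∀ p ∈ P, ∀ q ∈ P, p ≠ q → 1 ≤ dist p q) : 1 ≤ 2 * ρ := by
  obtain ⟨p, hp⟩ := hne
  obtain ⟨a, ha, b, hb, hab⟩ := Finset.one_lt_card.1 (hr.trans (hf p hp))
  obtain ⟨haP, hap⟩ := Finset.mem_filter.1 ha
  obtain ⟨hbP, hbp⟩ := Finset.mem_filter.1 hb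
  calc 1 ≤ dist a b := hmindist a haP b hbP hab
    _ ≤ dist a (f a) + dist b (f b) := by rw [hap, ← hbp]; exact dist_triangle_right _ _ _
    _ ≤ 2 * ρ := by linarith [hρ a haP, hρ b hbP]

end Cost

theorem two_pow_le_of_counters_full_below {N : ℕ → Finset X} {Q : ℕ → X → Finset X}
    {r istar : ℕ} {ρ : ℝ} (hNP : ∀ i, N i ⊆ P)
    (hQcard : ∀ i, ∀ u ∈ N i,
      min r (P.filter fun q => dist q u ≤ 2 * 2 ^ i).card ≤ (Q i u).card)
    (hminimal : ∀ j < istar, ∃ u ∈ N j, (Q j u).card < r)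
    (hball : ∀ p ∈ P, r ≤ (P.filter fun q => dist q p ≤ 2 * ρ).card) (hone : 1 ≤ 2 * ρ) :
    (2 : ℝ) ^ istar ≤ 2 * ρ := by
  cases istar with
  | zero => simpa using hone
  | succ j =>
    by_contra! hlarge
    obtain ⟨u, hu, hQlt⟩ := hminimal j j.lt_succ_self
    rw [pow_succ] at hlarge
    have hmono : (P.filter fun q => dist q u ≤ 2 * ρ) ⊆ P.filter fun q => dist q u ≤ 2 * 2 ^ j :=
      fun q hq => Finset.mem_filter.2 ⟨(Finset.mem_filter.1 hq).1, by
        linarith [(Finset.mem_filter.1 hq).2]⟩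
    have hfull := (hball u (hNP j hu)).trans (Finset.card_le_card hmono)
    have := hQcard j u hu
    omega

end RGather

open Classical in
theorem stmt19_general {X : Type*} [MetricSpace X] (P : Finset X) (hne : P.Nonempty)
    (r : ℕ) (hr : 2 ≤ r)
    (hmindist : ∀ p ∈ P, ∀ q ∈ P, p ≠ q → 1 ≤ dist p q)
    (C : ℝ) (hC : 1 ≤ C)
    (N : ℕ → Finset X) (Q : ℕ → X → Finset X)
    (hNP : ∀ i, N i ⊆ P)
    -- net invariants at every level
    (hsep : ∀ i : ℕ, ∀ u ∈ N i, ∀ v ∈ N i, u ≠ v → 4 * C * 2 ^ i < dist u v)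
    (hcov : ∀ i : ℕ, ∀ p ∈ P, ∃ u ∈ N i, dist p u ≤ 4 * C ^ 2 * 2 ^ i)
    -- counter invariants at every level
    (hQsub : ∀ i : ℕ, ∀ u ∈ N i, ∀ q ∈ Q i u, q ∈ P ∧ dist q u ≤ 2 * C * 2 ^ i)
    (hQcard : ∀ i : ℕ, ∀ u ∈ N i,
      min r (P.filter fun q => dist q u ≤ 2 * 2 ^ i).card ≤ (Q i u).card)
    -- `i*` is the minimal level at which every counter is full
    (istar : ℕ)
    (hfull : ∀ u ∈ N istar, r ≤ (Q istar u).card)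
    (hminimal : ∀ j < istar, ∃ u ∈ N j, (Q j u).card < r)
    -- the query assignment
    (c : X → X)
    (hc : ∀ p ∈ P, c p ∈ N istar ∧
      ((∃ q ∈ N istar, p ∈ Q istar q ∧ c p = q) ∨
       ((∀ q ∈ N istar, p ∉ Q istar q) ∧
        ∀ q ∈ N istar, dist p (c p) ≤ C * dist p q))) :
    (∀ u ∈ N istar, r ≤ (P.filter fun p => c p = u).card) ∧
    (∀ p ∈ P, dist p (c p) ≤ 4 * C ^ 3 * 2 ^ istar) ∧
    (∀ f : X → X, (∀ p ∈ P, r ≤ (P.filter fun q => f q = f p).card) →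
      4 * C ^ 3 * 2 ^ istar ≤ 8 * C ^ 3 * P.sup' hne fun q => dist q (f q)) := by
  refine ⟨fun u hu => ?_, fun p hp => ?_, fun f hf => ?_⟩
  · refine (hfull u hu).trans (Finset.card_le_card (RGather.counter_subset_cluster
      (δ := 2 * C * 2 ^ istar) (fun u hu v hv huv => ?_) (hQsub istar) (fun p hp => ?_) hu))
    · linarith [hsep istar u hu v hv huv]
    · exact (hc p hp).2.imp id fun h => h.1
  · refine (RGather.dist_center_le (by linarith) (fun u hu q hq => (hQsub istar u hu q hq).2)
      (hcov istar) (fun p hp => (hc p hp).2.imp id fun h => h.2) hp).trans (max_le ?_ ?_)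
    · gcongr
      exacts [by norm_num, le_self_pow₀ hC (by norm_num)]
    · linarith
  · set ρ := P.sup' hne fun q => dist q (f q)
    have hρ : ∀ q ∈ P, dist q (f q) ≤ ρ := fun q hq => P.le_sup' (fun q => dist q (f q)) hq
    have hlevel : (2 : ℝ) ^ istar ≤ 2 * ρ :=
      RGather.two_pow_le_of_counters_full_below hNP hQcard hminimal
        (fun p hp => RGather.le_card_filter_dist_le_two_mul hf hρ hp)
        (RGather.one_le_two_mul_cost hf hρ hne hr hmindist)
    calc 4 * C ^ 3 * 2 ^ istar ≤ 4 * C ^ 3 * (2 * ρ) := by gcongr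
      _ = 8 * C ^ 3 * ρ := by ring

open Classical in
/-- Incremental `r`-gather algorithm, query correctness: at the minimal level `i*`
at which all counters are full (`|Q_{i*}(q)| ≥ r` for all `q ∈ N_{i*}`), assigning
each point to the center whose counter contains it — or otherwise to a
`C`-approximate nearest center of `N_{i*}` — yields a clustering in which every
cluster has size at least `r` and every point is within distance `4·C³·2^{i*}` of
its center, and `4·C³·2^{i*} ≤ 8·C³·ρ*(P)` (expressed against the cost of an
arbitrary valid `r`-gather clustering `f`). -/
theorem stmt19 {X : Type*} [MetricSpace X] (P : Finset X) (hne : P.Nonempty)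
    (r : ℕ) (hr : 2 ≤ r) (hcard : r ≤ P.card)
    (hmindist : ∀ p ∈ P, ∀ q ∈ P, p ≠ q → 1 ≤ dist p q)
    (C : ℝ) (hC : 1 ≤ C)
    (N : ℕ → Finset X) (Q : ℕ → X → Finset X)
    (hNP : ∀ i, N i ⊆ P)
    -- net invariants at every level
    (hsep : ∀ i : ℕ, ∀ u ∈ N i, ∀ v ∈ N i, u ≠ v → 4 * C * 2 ^ i < dist u v)
    (hcov : ∀ i : ℕ, ∀ p ∈ P, ∃ u ∈ N i, dist p u ≤ 4 * C ^ 2 * 2 ^ i)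
    -- counter invariants at every level
    (hQsub : ∀ i : ℕ, ∀ u ∈ N i, ∀ q ∈ Q i u, q ∈ P ∧ dist q u ≤ 2 * C * 2 ^ i)
    (hQcard : ∀ i : ℕ, ∀ u ∈ N i,
      min r (P.filter fun q => dist q u ≤ 2 * 2 ^ i).card ≤ (Q i u).card)
    -- `i*` is the minimal level at which every counter is full
    (istar : ℕ)
    (hfull : ∀ u ∈ N istar, r ≤ (Q istar u).card)
    (hminimal : ∀ j < istar, ∃ u ∈ N j, (Q j u).card < r)
    -- the query assignment
    (c : X → X)
    (hc : ∀ p ∈ P, c p ∈ N istar ∧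
      ((∃ q ∈ N istar, p ∈ Q istar q ∧ c p = q) ∨
       ((∀ q ∈ N istar, p ∉ Q istar q) ∧
        ∀ q ∈ N istar, dist p (c p) ≤ C * dist p q))) :
    (∀ u ∈ N istar, r ≤ (P.filter fun p => c p = u).card) ∧
    (∀ p ∈ P, dist p (c p) ≤ 4 * C ^ 3 * 2 ^ istar) ∧
    (∀ f : X → X, (∀ p ∈ P, r ≤ (P.filter fun q => f q = f p).card) →
      4 * C ^ 3 * 2 ^ istar ≤ 8 * C ^ 3 * P.sup' hne fun q => dist q (f q)) :=
  stmt19_general P hne r hr hmindist C hC N Q hNP hsep hcov hQsub hQcard istar hfull hminimal c hc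
end
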